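/- Let k ≥ 2 and n ≥ 1, and let T_n denote the terminal block of W_n^{(k)}: T_n is the one-letter word n if n < k, and T_n = k ⊕ W_{n−k}^{(k)} if n ≥ k. If a length-2 word B occurs in W_n^{(k)} at a position crossing the boundary between the prefix of W_n^{(k)} of length |W_n^{(k)}| − |T_n| and the terminal block T_n (i.e., at starting position |W_n^{(k)}| − |T_n| − 1), then B = (0.n) if n < k and B = (n−k+1 . k) if n ≥ k; moreover there is exactly one such boundary-crossing occurrence position. -/

import Mathlib

/-- Image of a single letter `m = k*i + j` under the k-Bonacci morphism `φ_k` over ℕ: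
`φ_k(ki+j) = (ki)(ki+j+1)` for `0 ≤ j ≤ k-2`, and `φ_k(ki+(k-1)) = ki+k`. -/
def phiLetter (k m : ℕ) : List ℕ :=
  if m % k = k - 1 then [m + 1] else [k * (m / k), m + 1]

/-- The morphism `φ_k`, extended to words by concatenation. -/
def phi (k : ℕ) (w : List ℕ) : List ℕ := (w.map (phiLetter k)).flatten

/-- `W k n = φ_k^n(0)`, the n-th iterate of `φ_k` applied to the one-letter word `0`. -/
def W (k n : ℕ) : List ℕ := (phi k)^[n] [0]

/-- `shift n w = n ⊕ w`, adding `n` to every letter. -/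
def shift (n : ℕ) (w : List ℕ) : List ℕ := w.map (· + n)

/-- `occ B w = |w|_B`, the number of (possibly overlapping) occurrences of `B`
as a factor of `w`, i.e. the number of positions `i` at which `B` is a prefix
of the suffix of `w` starting at `i`. -/
def occ (B w : List ℕ) : ℕ :=
  ((List.range (w.length + 1)).filter (fun i => decide (B <+: w.drop i))).length

/-- `C k B = C_B^{(k)}(y) = Σ_{n≥0} |W_n^{(k)}|_B yⁿ` as a formal power series over ℚ. -/
noncomputable def C (k : ℕ) (B : List ℕ) : PowerSeries ℚ :=
  PowerSeries.mk (fun n => (occ B (W k n) : ℚ))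

/-- `Hgf r = H_r(y)`, the multiplicative inverse of `1 - y - y² - ⋯ - y^r`. -/
noncomputable def Hgf (r : ℕ) : PowerSeries ℚ :=
  (1 - ∑ j ∈ Finset.Icc 1 r, (PowerSeries.X : PowerSeries ℚ) ^ j)⁻¹

/-- `Ggf r = G_r(y) = (1 - y^r)·H_r(y) - 1`. -/
noncomputable def Ggf (r : ℕ) : PowerSeries ℚ :=
  (1 - (PowerSeries.X : PowerSeries ℚ) ^ r) * Hgf r - 1

/-- The set `B^{(k)} = B_1^{(k)} ∪ B_2^{(k)} ∪ B_3^{(k)}` of length-2 words. -/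
def Bset (k : ℕ) : Set (List ℕ) :=
  {U | (∃ i a : ℕ, 1 ≤ a ∧ U = [a + k * i, k + k * i]) ∨
       (∃ i b : ℕ, 1 ≤ b ∧ b ≤ k - 1 ∧ U = [k * i, b + k * i]) ∨
       (∃ a : ℕ, 1 ≤ a ∧ U = [a, 0])}

/-- The list of blocks in the decomposition of `W_n^{(k)}` for `n ≥ k`:
`W_{n-1}, …, W_{n-k+1}, k ⊕ W_{n-k}`. -/
def blocks (k n : ℕ) : List (List ℕ) :=
  (List.range (k - 1)).map (fun j => W k (n - 1 - j)) ++ [shift k (W k (n - k))]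

lemma phi_append (k : ℕ) (a b : List ℕ) : phi k (a ++ b) = phi k a ++ phi k b := by
  simp [phi]

lemma phi_cons (k a : ℕ) (t : List ℕ) : phi k (a :: t) = phiLetter k a ++ phi k t := by
  simp [phi]

lemma W_succ (k n : ℕ) : W k (n + 1) = phi k (W k n) :=
  Function.iterate_succ_apply' (phi k) n [0]

lemma phi_shift (k : ℕ) (hk : 2 ≤ k) (w : List ℕ) :
    phi k (shift k w) = shift k (phi k w) := by
  have hk0 : 0 < k := by omega
  induction w with
  | nil => simp [phi, shift]
  | cons a t ih =>
    have : shift k (a :: t) = (a + k) :: shift k t := by simp [shift]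
    rw [this, phi_cons, phi_cons, ih]
    have hmap : shift k (phiLetter k a ++ phi k t)
        = shift k (phiLetter k a) ++ shift k (phi k t) := by simp [shift]
    rw [hmap]
    congr 1
    unfold phiLetter
    have h1 : (a + k) % k = a % k := Nat.add_mod_right a k
    have h2 : (a + k) / k = a / k + 1 := Nat.add_div_right a hk0
    by_cases h : a % k = k - 1 <;> simp [h1, h2, h, shift, Nat.mul_add] <;> omega

lemma phi_suffix {k : ℕ} {s w : List ℕ} (h : s <:+ w) : phi k s <:+ phi k w := by
  obtain ⟨p, rfl⟩ := h
  rw [phi_append]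
  exact ⟨phi k p, rfl⟩

lemma phiLetter_last (k m : ℕ) : [m + 1] <:+ phiLetter k m := by
  unfold phiLetter
  split
  · exact ⟨[], rfl⟩
  · exact ⟨[k * (m / k)], rfl⟩

lemma W_head (k : ℕ) (hk : 2 ≤ k) (n : ℕ) : ∃ t, W k n = 0 :: t := by
  induction n with
  | zero => exact ⟨[], rfl⟩
  | succ m ih =>
    obtain ⟨t, ht⟩ := ih
    refine ⟨1 :: phi k t, ?_⟩
    rw [W_succ, ht, phi_cons]
    have h0 : phiLetter k 0 = [0, 1] := by
      unfold phiLetter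
      have : (0 : ℕ) % k = 0 := Nat.zero_mod k
      rw [this]
      have : ¬ (0 = k - 1) := by omega
      simp [this, Nat.zero_div]
    rw [h0]; rfl

lemma key (k : ℕ) (hk : 2 ≤ k) (n : ℕ) (hn : 1 ≤ n) :
    (if n < k then [0, n] else (n - k + 1) :: shift k (W k (n - k))) <:+ W k n := by
  induction n with
  | zero => omega
  | succ m ih =>
    rcases Nat.eq_zero_or_pos m with hm | hm
    · subst hm
      have h1 : (1 : ℕ) < k := by omega
      have hW1 : W k 1 = [0, 1] := by
        rw [show (1:ℕ) = 0 + 1 from rfl, W_succ]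
        show phi k [0] = [0, 1]
        rw [phi_cons]
        unfold phiLetter
        have : (0 : ℕ) % k = 0 := Nat.zero_mod k
        rw [this]
        have : ¬ (0 = k - 1) := by omega
        simp [this, Nat.zero_div, phi]
      simp [h1, hW1]
    · have hs := ih hm
      rw [W_succ]
      rcases lt_trichotomy (m + 1) k with hlt | heq | hgt
      · -- m + 1 < k, so m < k and m ≠ k-1
        have hmk : m < k := by omega
        rw [if_pos hmk] at hs
        rw [if_pos hlt]
        have h2 : phi k [0, m] = [0, 1] ++ [0, m + 1] := by
          rw [phi_cons, phi_cons]
          unfold phiLetter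
          have e0 : (0 : ℕ) % k = 0 := Nat.zero_mod k
          have em : m % k = m := Nat.mod_eq_of_lt hmk
          have n0 : ¬ ((0:ℕ) = k - 1) := by omega
          have nm : ¬ (m = k - 1) := by omega
          rw [e0, em]
          simp [n0, nm, Nat.zero_div, Nat.div_eq_of_lt hmk, phi]
        have : [0, m + 1] <:+ phi k [0, m] := by rw [h2]; exact ⟨[0,1], rfl⟩
        exact this.trans (phi_suffix hs)
      · -- m + 1 = k
        have hmk : m < k := by omega
        rw [if_pos hmk] at hs
        have hnk : ¬ (m + 1 < k) := by omega
        rw [if_neg hnk]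
        have e1 : m + 1 - k = 0 := by omega
        rw [e1]
        have hW0 : shift k (W k 0) = [k] := by simp [W, shift]
        rw [hW0]
        have h2 : phi k [0, m] = [0, 1] ++ [m + 1] := by
          rw [phi_cons, phi_cons]
          unfold phiLetter
          have e0 : (0 : ℕ) % k = 0 := Nat.zero_mod k
          have em : m % k = m := Nat.mod_eq_of_lt hmk
          have n0 : ¬ ((0:ℕ) = k - 1) := by omega
          have ym : m = k - 1 := by omega
          rw [e0, em]
          simp [n0, ym, Nat.zero_div, phi]
        have : [1, m + 1] <:+ phi k [0, m] := by rw [h2]; exact ⟨[0], rfl⟩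
        have hl : [0 + 1, k] = [1, m + 1] := by simp; omega
        rw [hl]
        exact this.trans (phi_suffix hs)
      · -- m + 1 > k, i.e. m ≥ k
        have hmk : ¬ (m < k) := by omega
        rw [if_neg hmk] at hs
        have hnk : ¬ (m + 1 < k) := by omega
        rw [if_neg hnk]
        have hphi : phi k ((m - k + 1) :: shift k (W k (m - k)))
            = phiLetter k (m - k + 1) ++ shift k (W k (m - k + 1)) := by
          rw [phi_cons, phi_shift k hk, ← W_succ]
        have h4 : [m - k + 2] ++ shift k (W k (m - k + 1))
            <:+ phiLetter k (m - k + 1) ++ shift k (W k (m - k + 1)) := by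
          obtain ⟨q, hq⟩ := phiLetter_last k (m - k + 1)
          exact ⟨q, by rw [← List.append_assoc, hq]⟩
        have e1 : m + 1 - k = m - k + 1 := by omega
        rw [e1]
        show (m - k + 2) :: shift k (W k (m - k + 1)) <:+ phi k (W k m)
        have : (m - k + 2) :: shift k (W k (m - k + 1))
            = [m - k + 2] ++ shift k (W k (m - k + 1)) := rfl
        rw [this]
        rw [← hphi] at h4
        exact h4.trans (phi_suffix hs)

theorem stmt8 (k n : ℕ) (hk : 2 ≤ k) (hn : 1 ≤ n) :
    let T : List ℕ := if n < k then [n] else shift k (W k (n - k))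
    let p : ℕ := (W k n).length - T.length - 1
    ((W k n).drop p).take 2 = (if n < k then [0, n] else [n - k + 1, k]) ∧
    ∀ B : List ℕ, B.length = 2 → B <+: (W k n).drop p →
      B = (if n < k then [0, n] else [n - k + 1, k]) := by
  intro T p
  have hS := key k hk n hn
  set f : ℕ := if n < k then 0 else n - k + 1 with hf
  have hST : (if n < k then [0, n] else (n - k + 1) :: shift k (W k (n - k))) = f :: T := by
    by_cases h : n < k <;> simp [T, hf, h]
  rw [hST] at hS
  obtain ⟨Q, hQ⟩ := hS
  have hl : (W k n).length = Q.length + T.length + 1 := by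
    rw [← hQ]; simp; omega
  have hp : p = Q.length := by
    show (W k n).length - T.length - 1 = Q.length
    omega
  have hdrop : (W k n).drop p = f :: T := by
    rw [hp, ← hQ]
    exact List.drop_left
  have hfirst : ((W k n).drop p).take 2 = (if n < k then [0, n] else [n - k + 1, k]) := by
    rw [hdrop]
    by_cases h : n < k
    · simp [T, hf, h]
    · obtain ⟨t, ht⟩ := W_head k hk (n - k)
      simp [T, hf, h, ht, shift]
  refine ⟨hfirst, fun B hB2 hBpre => ?_⟩
  have hBtake : B = ((W k n).drop p).take B.length := List.prefix_iff_eq_take.mp hBpre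
  rw [hB2] at hBtake
  rw [hBtake, hfirst]
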